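/- Let G be a tournament on a finite vertex set obtained by orienting a complete graph via a linear order, and let H ⊆ G be the true DAG. Suppose for every non-edge (u, v) of H there exists a set S of parents of v in H with u ⟂ v | S under the generated distribution (causal Markov condition), and adjacency faithfulness holds (every edge of H yields dependence given any subset). Then removing from G exactly those edges u → v for which some subset S of v's G-parents renders u and v conditionally independent recovers exactly the edge set of H. -/

import Mathlib

theorem exists_separating_set_of_not_adj {V : Type*} [LinearOrder V] {H : V → V → Prop}
    {ind : V → V → Set V → Prop} (htopo : ∀ u v, H u v → u < v)
    (hmarkov : ∀ u v, ¬ H u v → ¬ H v u → u < v → ind u v ({p | H p v} \ {u}))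
    {u v : V} (huv : u < v) (hH : ¬ H u v) :
    ∃ S ⊆ {p | p < v} \ {u}, ind u v S :=
  ⟨{p | H p v} \ {u}, Set.sdiff_subset_sdiff_left fun p => htopo p v,
    hmarkov u v hH (fun hvu => (htopo v u hvu).not_gt huv) huv⟩

theorem pruning_recovers_dag_general {V : Type*} [LinearOrder V]
    (H : V → V → Prop) (htopo : ∀ u v, H u v → u < v)
    (ind : V → V → Set V → Prop)
    (hmarkov : ∀ u v, ¬ H u v → ¬ H v u → u < v →
      ind u v ({p | H p v} \ {u}))
    (hfaith : ∀ u v S, H u v → ¬ ind u v S) :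
    ∀ u v, (u < v ∧ ¬ ∃ S : Set V, S ⊆ {p | p < v} \ {u} ∧ ind u v S) ↔ H u v := by
  intro u v
  constructor
  · rintro ⟨huv, hkept⟩
    by_contra hH
    exact hkept (exists_separating_set_of_not_adj htopo hmarkov huv hH)
  · intro hH
    exact ⟨htopo u v hH, fun ⟨S, _, hind⟩ => hfaith u v S hH hind⟩

/-- Let `H` be a DAG on a finite linearly ordered vertex set with every
edge `u → v` satisfying `u < v` (so `H` is a subgraph of the tournament `K` given by
`u → v` iff `u < v`). Suppose an independence oracle `ind` is symmetric and satisfies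
the causal Markov condition (non-adjacent `u < v` are independent given the
`H`-parents of `v` minus `u`) and adjacency faithfulness (adjacent vertices are never
conditionally independent). Then removing from `K` exactly those edges `u → v` for
which some subset of `v`'s `K`-parents renders `u, v` conditionally independent
recovers exactly the edge set of `H`. -/
theorem pruning_recovers_dag {V : Type*} [Fintype V] [LinearOrder V]
    (H : V → V → Prop) (htopo : ∀ u v, H u v → u < v)
    (ind : V → V → Set V → Prop)
    (hsymm : ∀ u v S, ind u v S ↔ ind v u S)
    (hmarkov : ∀ u v, ¬ H u v → ¬ H v u → u < v →
      ind u v ({p | H p v} \ {u}))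
    (hfaith : ∀ u v S, H u v → ¬ ind u v S) :
    ∀ u v, (u < v ∧ ¬ ∃ S : Set V, S ⊆ {p | p < v} \ {u} ∧ ind u v S) ↔ H u v :=
  pruning_recovers_dag_general H htopo ind hmarkov hfaith
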